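/- For k ≥ r ≥ 3 and p,t ≥ 0, if π is a partition in C_<(k,r|p,t) such that π^{(2)}_p = 2t+4 with starting type s₃ (these are exactly the partitions in the subsets C^{(4)}_<(k,r|p,t) ∪ C^{(5)}_<(k,r|p,t)), then 2t+2 does not occur as a part of π. -/

import Mathlib

/-!
Since `π^{(2)}_p = 2t + 4` has starting type `s₃`, there is a `1`-marked part `2t + 4`. A part
`2t + 2` could then be neither `1`-marked (it conflicts with that `2t + 4`) nor `2`-marked (a
`2`-marked part below `2t + 4` is at most `π^{(2)}_{p+1} < 2t + 1`). By greediness of the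
marking, a part of mark `≥ 3` equal to `2t + 2` lies above conflicting `1`- and `2`-marked parts,
which, there being no odd parts `≥ 2t + 1`, must both equal `2t`. Hence `π^{(2)}_{p+1} = 2t`,
which then has starting type `s₀` or `s₁`: a `1`-marked `2t - 1` or `2t - 2` conflicts with the
`1`-marked `2t`.
-/
namespace Bressoud

/-- A partition: a weakly decreasing list of positive integers. -/
structure Partition where
  parts : List ℕ
  pos : ∀ x ∈ parts, 0 < x
  sorted : parts.Pairwise (· ≥ ·)

namespace Partition

/-- `|π|`, the sum of the parts of `π`. -/
def size (π : Partition) : ℕ := π.parts.sum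

/-- `ℓ(π)`, the number of parts of `π`. -/
def numParts (π : Partition) : ℕ := π.parts.length

end Partition

lemma exists_pos_not_mem (s : List ℕ) : ∃ n, 0 < n ∧ n ∉ s := by
  refine ⟨s.sum + 1, Nat.succ_pos _, fun h => ?_⟩
  have := List.single_le_sum (l := s) (fun x _ => Nat.zero_le x) _ h
  omega

/-- The least positive integer not occurring in `s`. -/
def mex1 (s : List ℕ) : ℕ := Nat.find (exists_pos_not_mem s)

/-- Parts `p ≥ q` conflict (must receive different marks) when `p - q ≤ 2`,
with strict inequality when `p` is odd. -/
def conflict (p q : ℕ) : Bool :=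
  if p % 2 = 1 then decide (p - q < 2) else decide (p - q ≤ 2)

/-- Greedy computation of the Göllnitz–Gordon marking: the parts are processed
from smallest to largest (second argument: remaining parts in increasing
order; first argument: already processed parts with their marks), and each
part receives the least positive mark different from the marks of all already
processed conflicting parts. -/
def ggAux : List (ℕ × ℕ) → List ℕ → List (ℕ × ℕ)
  | acc, [] => acc
  | acc, p :: rest =>
      ggAux ((p, mex1 ((acc.filter fun q => conflict p q.1).map Prod.snd)) :: acc) rest

/-- The Göllnitz–Gordon marking `GG(π)` of `π`, as a list of (part, mark)
pairs in decreasing order of parts. -/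
def ggMarks (π : Partition) : List (ℕ × ℕ) := ggAux [] π.parts.reverse

/-- There is an `m`-marked part equal to `x` in `GG(π)`. -/
def Marked (π : Partition) (x m : ℕ) : Prop := (x, m) ∈ ggMarks π

instance (π : Partition) (x m : ℕ) : Decidable (Marked π x m) := by
  unfold Marked; infer_instance

/-- The `i`-th row of `GG(π)`: the `i`-marked parts, in decreasing order. -/
def row (π : Partition) (i : ℕ) : List ℕ :=
  ((ggMarks π).filter fun q => q.2 == i).map Prod.fst

/-- `N_i(π)`: the number of `i`-marked parts of `π`. -/
def Nmk (π : Partition) (i : ℕ) : ℕ := (row π i).length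

/-- `π^{(i)}_j` as a natural number (meaningful for `1 ≤ j ≤ N_i(π)`;
junk value `0` otherwise). -/
def nth (π : Partition) (i j : ℕ) : ℕ := (row π i).getD (j - 1) 0

/-- The canonical embedding of the natural numbers into `EReal`. -/
noncomputable def natE (n : ℕ) : EReal := ((n : ℝ) : EReal)

/-- `π^{(i)}_j` as an extended real, with the conventions `π^{(i)}_0 = +∞`
and `π^{(i)}_j = -∞` for `j > N_i(π)`. -/
noncomputable def rowVal (π : Partition) (i j : ℕ) : EReal :=
  if j = 0 then ⊤
  else
    match (row π i)[j - 1]? with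
    | some x => natE x
    | none => ⊥

/-- The largest `l ≥ 0` such that there is no odd part of `π` greater than or
equal to `π^{(2)}_l` (the indices `1 ≤ j ≤ N₂(π)` with this property form an
initial segment, so this is also their number). -/
def bigL (π : Partition) : ℕ :=
  ((List.range' 1 (Nmk π 2)).filter fun j =>
    decide (∀ x ∈ π.parts, x % 2 = 1 → x < nth π 2 j)).length

/-- `startPair π b = (starting type of π^{(2)}_b, s_b(π))` for `1 ≤ b ≤ N₂(π)`.
Starting types are encoded by integers: `-1` stands for `s₋₁`, and `0,1,2,3`
for `s₀,s₁,s₂,s₃`; the value `9` is a junk value used when no case applies. -/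
def startPair (π : Partition) : ℕ → ℤ × ℕ
  | 0 => (9, 0)
  | b + 1 =>
    let v := nth π 2 (b + 1)
    if bigL π < b + 1 then (-1, 0)
    else
      let okLow : Bool :=
        if b = 0 then !decide ((v + 2) ∈ π.parts)
        else !decide (Marked π (v + 2) 1) || decide ((startPair π b).2 = v + 2)
      let ok2 : Bool :=
        if b = 0 then decide (Marked π (v + 2) 1)
        else decide (Marked π (v + 2) 1) && !decide ((startPair π b).2 = v + 2)
      if decide (Marked π (v - 1) 1) && okLow then (0, v - 1)
      else if decide (Marked π (v - 2) 1) && okLow then (1, v - 2)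
      else if ok2 then (2, v + 2)
      else if decide (Marked π v 1) then (3, v)
      else (9, 0)

/-- The starting type of `π^{(2)}_b`, encoded as an integer. -/
def startType (π : Partition) (b : ℕ) : ℤ := (startPair π b).1

/-- The set `C(k,r)`: partitions with no repeated odd part, in which the parts
equal to `1` and `2` have marks at most `r - 1`, and whose Göllnitz–Gordon
marking has at most `k - 1` rows. -/
def C (k r : ℕ) : Set Partition :=
  { π | (∀ x, x % 2 = 1 → π.parts.count x ≤ 1) ∧
        (∀ x m, Marked π x m → x ≤ 2 → m ≤ r - 1) ∧
        (∀ x m, Marked π x m → m ≤ k - 1) }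

/-- The set `C_<(k,r|p,t)`. -/
noncomputable def Clt (k r p t : ℕ) : Set Partition :=
  { π | π ∈ C k r ∧
        (∀ x ∈ π.parts, x % 2 = 1 → x < 2 * t + 1) ∧
        rowVal π 2 (p + 1) < natE (2 * t + 1) ∧
        natE (2 * t + 1) < rowVal π 2 p ∧
        (rowVal π 2 p = natE (2 * t + 2) →
          startType π p = 2 ∨ startType π p = 3) ∧
        (rowVal π 2 (p + 1) = natE (2 * t) →
          startType π (p + 1) = 0 ∨ startType π (p + 1) = 1) }

/-- The set `C_=(k,r|p,t)`. -/
noncomputable def Ceq (k r p t : ℕ) : Set Partition :=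
  { π | π ∈ C k r ∧
        (2 * t + 1) ∈ π.parts ∧
        (∀ x ∈ π.parts, x % 2 = 1 → x ≤ 2 * t + 1) ∧
        (∀ m, Marked π (2 * t + 1) m → m ≤ 2) ∧
        natE (2 * t + 2) ≤ rowVal π 2 p ∧
        rowVal π 2 (p + 1) ≤ natE (2 * t + 2) ∧
        ((∃ j, 1 ≤ j ∧ j ≤ Nmk π 2 ∧ nth π 2 j = 2 * t + 2 ∧ startType π j = 0) →
          rowVal π 2 (p + 1) = natE (2 * t + 2) ∧
          ∃ i, 1 ≤ i ∧ i ≤ p + 1 ∧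
            nth π 2 i = 2 * t + 2 + 4 * (p + 1 - i) ∧
            π.parts.count (2 * t + 2 + 4 * (p + 1 - i)) = 1) ∧
        ((∃ j, 1 ≤ j ∧ j ≤ Nmk π 2 ∧ nth π 2 j = 2 * t + 2 ∧ startType π j = 2) →
          rowVal π 2 p = natE (2 * t + 2)) ∧
        ((2 * t + 2) ∈ π.parts → ¬ Marked π (2 * t + 2) 2 →
          rowVal π 2 p = natE (2 * t + 4) ∧ startType π p = 3 ∧
          ∃ i, 1 ≤ i ∧ i ≤ p ∧
            nth π 2 i = 2 * t + 4 + 4 * (p - i) ∧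
            (2 * t + 4 + 4 * (p - i) + 2) ∉ π.parts) }

/-- The first starting cluster index `p₁` of `π` (with `p₀ = p + 1`): the least
`j ≥ 1` such that `π^{(2)}_j = π^{(2)}_p + 4(p - j)` and all of
`π^{(2)}_j, …, π^{(2)}_p` have the same starting type as `π^{(2)}_p`. -/
def firstCluster (π : Partition) (p : ℕ) : ℕ :=
  ((List.range' 1 p).filter fun j =>
    (List.range' j (p + 1 - j)).all fun i =>
      decide (nth π 2 i = nth π 2 p + 4 * (p - i)) &&
      decide (startType π i = startType π p)).headD p

/-- The set `ℰ(k,r)` of partitions in `C(k,r)` with no odd parts. -/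
def E (k r : ℕ) : Set Partition :=
  { π | π ∈ C k r ∧ ∀ x ∈ π.parts, x % 2 = 0 }

/-- `C_<(k,r|m) = ⋃_{p+t=m} C_<(k,r|p,t)`. -/
noncomputable def Cltm (k r m : ℕ) : Set Partition :=
  { π | ∃ p t, p + t = m ∧ π ∈ Clt k r p t }

/-- `C_=(k,r|m) = ⋃_{p+t=m} C_=(k,r|p,t)`. -/
noncomputable def Ceqm (k r m : ℕ) : Set Partition :=
  { π | ∃ p t, p + t = m ∧ π ∈ Ceq k r p t }

/-- `I_N`: partitions into distinct odd parts, each at least `2N + 1`. -/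
def Iset (N : ℕ) : Set Partition :=
  { ζ | (∀ x ∈ ζ.parts, x % 2 = 1 ∧ 2 * N + 1 ≤ x) ∧ ζ.parts.Nodup }

/-- `F(3,3)`: pairs `(π, ζ)` with `π ∈ ℰ(3,3)` and `ζ ∈ I_{N₂(π)}`. -/
noncomputable def F33 : Set (Partition × Partition) :=
  { pq | pq.1 ∈ E 3 3 ∧ pq.2 ∈ Iset (Nmk pq.1 2) }

lemma mex1_pos (s : List ℕ) : 0 < mex1 s := (Nat.find_spec (exists_pos_not_mem s)).1

lemma mex1_not_mem (s : List ℕ) : mex1 s ∉ s := (Nat.find_spec (exists_pos_not_mem s)).2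

lemma mem_of_pos_of_lt_mex1 {s : List ℕ} {m : ℕ} (h0 : 0 < m) (h : m < mex1 s) : m ∈ s := by
  by_contra hm
  exact absurd (Nat.find_min' (exists_pos_not_mem s) ⟨h0, hm⟩) (not_le.2 h)

lemma conflict_iff_of_even {a b : ℕ} (ha : a % 2 = 0) : conflict a b = true ↔ a - b ≤ 2 := by
  simp [conflict, ha]

structure IsGGMarking (L : List (ℕ × ℕ)) : Prop where
  mark_pos : ∀ q ∈ L, 0 < q.2
  mark_ne_of_conflict : ∀ x mx y my, (x, mx) ∈ L → (y, my) ∈ L → y < x →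
    conflict x y = true → mx ≠ my
  exists_conflict_of_lt_mark : ∀ x mx m, (x, mx) ∈ L → 0 < m → m < mx →
    ∃ b ≤ x, (b, m) ∈ L ∧ conflict x b = true

lemma map_fst_ggAux (l : List ℕ) (acc : List (ℕ × ℕ)) :
    (ggAux acc l).map Prod.fst = l.reverse ++ acc.map Prod.fst := by
  induction l generalizing acc with
  | nil => simp [ggAux]
  | cons a rest ih => simp [ggAux, ih]

lemma IsGGMarking.cons {acc : List (ℕ × ℕ)} {a : ℕ} (hacc : IsGGMarking acc)
    (hle : ∀ q ∈ acc, q.1 ≤ a) :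
    IsGGMarking ((a, mex1 ((acc.filter fun q => conflict a q.1).map Prod.snd)) :: acc) := by
  set s := (acc.filter fun q => conflict a q.1).map Prod.snd
  refine ⟨?_, ?_, ?_⟩ <;> simp only [List.mem_cons, Prod.forall, Prod.mk.injEq]
  · rintro x mx (⟨rfl, rfl⟩ | hx)
    exacts [mex1_pos s, hacc.mark_pos _ hx]
  · rintro x mx y my (⟨rfl, rfl⟩ | hx) (⟨rfl, rfl⟩ | hy) hyx hc
    · exact absurd hyx (lt_irrefl _)
    · rintro rfl
      exact mex1_not_mem s (List.mem_map.2 ⟨_, List.mem_filter.2 ⟨hy, hc⟩, rfl⟩)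
    · exact absurd hyx (not_lt.2 (hle _ hx))
    · exact hacc.mark_ne_of_conflict x mx y my hx hy hyx hc
  · rintro x mx m (⟨rfl, rfl⟩ | hx) h0 hlt
    · obtain ⟨q, hq, rfl⟩ := List.mem_map.1 (mem_of_pos_of_lt_mex1 h0 hlt)
      obtain ⟨hq, hc⟩ := List.mem_filter.1 hq
      exact ⟨q.1, hle q hq, Or.inr hq, hc⟩
    · obtain ⟨b, hbx, hb, hc⟩ := hacc.exists_conflict_of_lt_mark x mx m hx h0 hlt
      exact ⟨b, hbx, Or.inr hb, hc⟩

lemma isGGMarking_ggAux (l : List ℕ) (acc : List (ℕ × ℕ)) (hl : l.Pairwise (· ≤ ·))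
    (hle : ∀ q ∈ acc, ∀ y ∈ l, q.1 ≤ y) (hacc : IsGGMarking acc) :
    IsGGMarking (ggAux acc l) := by
  induction l generalizing acc with
  | nil => exact hacc
  | cons a rest ih =>
    rw [List.pairwise_cons] at hl
    refine ih _ hl.2 ?_ (hacc.cons fun q hq => hle q hq a List.mem_cons_self)
    intro q hq y hy
    rcases List.mem_cons.1 hq with rfl | hq
    exacts [hl.1 y hy, hle q hq y (List.mem_cons_of_mem _ hy)]

lemma _root_.List.Pairwise.exists_getElem?_succ_ge {α : Type*} [LinearOrder α] {l : List α}
    (hl : l.Pairwise (· ≥ ·)) {j : ℕ} {a x : α} (ha : l[j]? = some a) (hx : x ∈ l)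
    (hxa : x < a) : ∃ y, l[j + 1]? = some y ∧ x ≤ y := by
  obtain ⟨i, hi, rfl⟩ := List.mem_iff_getElem.1 hx
  obtain ⟨hj, rfl⟩ := List.getElem?_eq_some_iff.1 ha
  have hji : j < i := by
    by_contra! h
    rcases h.lt_or_eq with h | rfl
    · exact (List.pairwise_iff_getElem.1 hl i j hi hj h).not_gt hxa
    · exact hxa.ne rfl
  refine ⟨l[j + 1], List.getElem?_eq_getElem _, ?_⟩
  rcases (Nat.succ_le_of_lt hji).lt_or_eq with h | rfl
  · exact List.pairwise_iff_getElem.1 hl _ _ _ hi h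
  · exact le_rfl

section

variable {π : Partition}

lemma isGGMarking_ggMarks (π : Partition) : IsGGMarking (ggMarks π) :=
  isGGMarking_ggAux _ _ (List.pairwise_reverse.2 π.sorted) (by simp) ⟨by simp, by simp, by simp⟩

lemma map_fst_ggMarks (π : Partition) : (ggMarks π).map Prod.fst = π.parts := by
  simp [ggMarks, map_fst_ggAux]

lemma mem_parts_of_marked {x m : ℕ} (h : Marked π x m) : x ∈ π.parts := by
  rw [← map_fst_ggMarks π]
  exact List.mem_map.2 ⟨(x, m), h, rfl⟩

lemma exists_marked_of_mem_parts {x : ℕ} (h : x ∈ π.parts) : ∃ m, Marked π x m := by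
  rw [← map_fst_ggMarks π] at h
  obtain ⟨q, hq, rfl⟩ := List.mem_map.1 h
  exact ⟨q.2, hq⟩

lemma mark_pos {x m : ℕ} (h : Marked π x m) : 0 < m :=
  (isGGMarking_ggMarks π).mark_pos _ h

lemma mark_ne_of_conflict {x y mx my : ℕ} (hx : Marked π x mx) (hy : Marked π y my) (hyx : y < x)
    (hc : conflict x y = true) : mx ≠ my :=
  (isGGMarking_ggMarks π).mark_ne_of_conflict x mx y my hx hy hyx hc

lemma exists_marked_conflict_of_lt_mark {x mx m : ℕ} (hx : Marked π x mx) (h0 : 0 < m)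
    (hm : m < mx) : ∃ b ≤ x, Marked π b m ∧ conflict x b = true :=
  (isGGMarking_ggMarks π).exists_conflict_of_lt_mark x mx m hx h0 hm

lemma mark_ne_of_even_of_le_add_two {x y mx my : ℕ} (hx : Marked π x mx) (hy : Marked π y my)
    (hx2 : x % 2 = 0) (hyx : y < x) (hxy : x ≤ y + 2) : mx ≠ my :=
  mark_ne_of_conflict hx hy hyx ((conflict_iff_of_even hx2).2 (by omega))

lemma marked_of_marked_add_two {x mx m : ℕ} (hx : Marked π (x + 2) mx) (hx2 : x % 2 = 0)
    (hodd : x + 1 ∉ π.parts) (h0 : 0 < m) (hm : m < mx) (hxm : ¬ Marked π (x + 2) m) :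
    Marked π x m := by
  obtain ⟨b, hbx, hb, hc⟩ := exists_marked_conflict_of_lt_mark hx h0 hm
  have hb2 := (conflict_iff_of_even (by omega)).1 hc
  have hb1 : b ≠ x + 1 := fun h => hodd (h ▸ mem_parts_of_marked hb)
  have hb0 : b ≠ x + 2 := fun h => hxm (h ▸ hb)
  obtain rfl : b = x := by omega
  exact hb

lemma mem_row_iff {x i : ℕ} : x ∈ row π i ↔ Marked π x i := by
  simp [row, Marked]

lemma row_sorted (π : Partition) (i : ℕ) : (row π i).Pairwise (· ≥ ·) := by
  have h := π.sorted
  rw [← map_fst_ggMarks π, List.pairwise_map] at h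
  exact List.pairwise_map.2 (h.filter _)

lemma natE_lt_natE_iff {a b : ℕ} : natE a < natE b ↔ a < b := by
  simp [natE]

lemma rowVal_eq_natE_iff {i j n : ℕ} :
    rowVal π i j = natE n ↔ j ≠ 0 ∧ (row π i)[j - 1]? = some n := by
  unfold rowVal
  split_ifs with hj
  · simp [hj, natE, (EReal.natCast_ne_top n).symm]
  · cases (row π i)[j - 1]? <;> simp [hj, natE, (EReal.natCast_ne_bot n).symm]

lemma nth_eq_of_rowVal_eq {i j n : ℕ} (h : rowVal π i j = natE n) : nth π i j = n := by
  simp [nth, List.getD_eq_getElem?_getD, (rowVal_eq_natE_iff.1 h).2]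

lemma exists_rowVal_succ_eq_ge {i p a x : ℕ} (hp : rowVal π i p = natE a) (hx : Marked π x i)
    (hxa : x < a) : ∃ y, rowVal π i (p + 1) = natE y ∧ x ≤ y := by
  obtain ⟨hp0, ha⟩ := rowVal_eq_natE_iff.1 hp
  obtain ⟨y, hy, hxy⟩ := (row_sorted π i).exists_getElem?_succ_ge ha (mem_row_iff.2 hx) hxa
  refine ⟨y, rowVal_eq_natE_iff.2 ⟨p.succ_ne_zero, ?_⟩, hxy⟩
  rwa [Nat.sub_add_cancel (Nat.pos_of_ne_zero hp0)] at hy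

lemma marked_of_startType_eq_three {b : ℕ} (h : startType π b = 3) : Marked π (nth π 2 b) 1 := by
  cases b with
  | zero => simp [startType, startPair] at h
  | succ b =>
    by_contra hm
    rw [startType, startPair] at h
    split_ifs at h <;> simp_all <;> split_ifs at h <;> simp_all

lemma marked_sub_of_startType_le_one {b : ℕ} (h : startType π b = 0 ∨ startType π b = 1) :
    Marked π (nth π 2 b - 1) 1 ∨ Marked π (nth π 2 b - 2) 1 := by
  cases b with
  | zero => simp [startType, startPair] at h
  | succ b =>
    by_contra! hm
    rw [startType, startPair] at h
    rcases h with h | h <;> (split_ifs at h <;> simp_all <;> split_ifs at h <;> simp_all)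

end

theorem two_t_plus_two_not_occur_general (k r p t : ℕ)
    (π : Partition) (hπ : π ∈ Clt k r p t)
    (hval : rowVal π 2 p = natE (2 * t + 4)) (hst : startType π p = 3) :
    (2 * t + 2) ∉ π.parts := by
  obtain ⟨-, hodd, hlt, -, -, hlow⟩ := hπ
  intro hmem
  have h4 : Marked π (2 * t + 4) 1 := nth_eq_of_rowVal_eq hval ▸ marked_of_startType_eq_three hst
  have below : ∀ x, Marked π x 2 → x < 2 * t + 4 →
      ∃ y, rowVal π 2 (p + 1) = natE y ∧ x ≤ y ∧ y < 2 * t + 1 := by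
    intro x hx hxa
    obtain ⟨y, hy, hxy⟩ := exists_rowVal_succ_eq_ge hval hx hxa
    exact ⟨y, hy, hxy, natE_lt_natE_iff.1 (hy ▸ hlt)⟩
  have hnot1 : ¬ Marked π (2 * t + 2) 1 := fun h =>
    mark_ne_of_even_of_le_add_two h4 h (by omega) (by omega) le_rfl rfl
  have hnot2 : ¬ Marked π (2 * t + 2) 2 := fun h => by
    obtain ⟨y, -, hy, hy'⟩ := below _ h (by omega)
    omega
  obtain ⟨m, hm⟩ := exists_marked_of_mem_parts hmem
  have hm3 : 3 ≤ m := by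
    have := mark_pos hm
    by_contra!
    interval_cases m <;> contradiction
  have hodd1 : 2 * t + 1 ∉ π.parts := fun h => (hodd _ h (by omega)).false
  have h1 := marked_of_marked_add_two hm (by omega) hodd1 one_pos (by omega) hnot1
  have h2 := marked_of_marked_add_two hm (by omega) hodd1 two_pos (by omega) hnot2
  obtain ⟨y, hy, h2ty, hyt⟩ := below _ h2 (by omega)
  obtain rfl : y = 2 * t := by omega
  have ht : 0 < t := by
    have := π.pos _ (mem_parts_of_marked h1)
    omega
  rcases marked_sub_of_startType_le_one (hlow hy) with h | h <;> rw [nth_eq_of_rowVal_eq hy] at h <;>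
    exact mark_ne_of_even_of_le_add_two h1 h (by omega) (by omega) (by omega) rfl

/-- Proposition 2.10 (2): if `π ∈ C_<(k,r|p,t)` with `π^{(2)}_p = 2t + 4` of
starting type `s₃`, then `2t + 2` does not occur in `π`. -/
theorem two_t_plus_two_not_occur (k r p t : ℕ) (hrk : r ≤ k) (hr : 3 ≤ r)
    (π : Partition) (hπ : π ∈ Clt k r p t)
    (hval : rowVal π 2 p = natE (2 * t + 4)) (hst : startType π p = 3) :
    (2 * t + 2) ∉ π.parts :=
  two_t_plus_two_not_occur_general k r p t π hπ hval hst

end Bressoud
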